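/- arXiv:1210.7884 — 2 statements merged into one kernel-verified Lean document; each statement's English description precedes it below -/
import Mathlib

section
/- Let K be a number field and T a finite set of places of K containing all archimedean places. Let U_{K,T} = {α ∈ K^× : ‖α‖_v = 1 for every place v of K with v ∉ T} be the group of T-units, and consider the logarithmic embedding l : U_{K,T} → ℝ^T given by l(α) = (([K_v:ℚ_v]/[K:ℚ]) · log ‖α‖_v)_{v ∈ T}. Then the ℚ-linear span of the image l(U_{K,T}) is dense in the hyperplane H = {x ∈ ℝ^T : Σ_{v ∈ T} x_v = 0} (with respect to any norm on the finite-dimensional space ℝ^T). -/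
open NumberField IsDedekindDomain Ideal
open scoped Classical

variable (K : Type*) [Field K] [NumberField K]

/-- The valuation `ord_v : K → ℤ` attached to a finite place (height-one prime) `v`,
with the convention `ord_v 0 = 0`. -/
noncomputable def ordAt (v : HeightOneSpectrum (𝓞 K)) (α : K) : ℤ :=
  if h : v.valuation K α = 0 then 0
  else - Multiplicative.toAdd (WithZero.unzero h)

/-- The residue characteristic of a finite place. -/
noncomputable def resChar (v : HeightOneSpectrum (𝓞 K)) : ℕ :=
  ringChar (𝓞 K ⧸ v.asIdeal)

/-- The ramification index `e_v` of a finite place over its residue characteristic. -/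
noncomputable def ramIdx (v : HeightOneSpectrum (𝓞 K)) : ℕ :=
  Ideal.ramificationIdx' (Ideal.span {(resChar K v : ℤ)}) v.asIdeal

/-- The local degree `[K_v : ℚ_p] = e_v ⬝ f_v` of a finite place `v` over the rational
prime `p` below it. -/
noncomputable def localDeg (v : HeightOneSpectrum (𝓞 K)) : ℕ :=
  ramIdx K v * Ideal.inertiaDeg' (Ideal.span {(resChar K v : ℤ)}) v.asIdeal

/-- The absolute value `‖·‖_v` at a finite place `v`, normalized so that it extends the usual
`p`-adic absolute value on `ℚ`: `‖α‖_v = p ^ (-ord_v(α) / e_v)`. -/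
noncomputable def finAbs (v : HeightOneSpectrum (𝓞 K)) (α : K) : ℝ :=
  if α = 0 then 0 else (resChar K v : ℝ) ^ (-(ordAt K v α : ℝ) / (ramIdx K v : ℝ))

/-- A place of the number field `K`: either an archimedean (infinite) place or a
nonarchimedean (finite) place, i.e. a height-one prime of the ring of integers. -/
abbrev Place := InfinitePlace K ⊕ HeightOneSpectrum (𝓞 K)

/-- The absolute value `‖·‖_v` attached to a place `v` of `K`, normalized so that it extends
the usual absolute value `|·|_p` on `ℚ` (for `p` a rational prime or `∞`). -/
noncomputable def placeAbs (v : Place K) (α : K) : ℝ :=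
  match v with
  | .inl w => w α
  | .inr v => finAbs K v α

/-- The local degree `[K_v : ℚ_v]` of a place of `K`. -/
noncomputable def placeLocalDeg (v : Place K) : ℕ :=
  match v with
  | .inl w => w.mult
  | .inr v => localDeg K v

/-!
By the product formula every `T`-unit lies in the hyperplane, and since `ℚ` is dense in `ℝ` the
closure of the `ℚ`-span is the `ℝ`-span. For the converse, if `h` is the class number and `v ∈ T`
is a finite place, a generator of `v ^ h` is a `T`-unit whose logarithmic vector has, among the
finite coordinates, only the `v`-coordinate nonzero. Subtracting multiples of these vectors
reduces to a vector of the hyperplane supported on the infinite places, and those are reached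
by Dirichlet's unit theorem: the logarithmic vectors of the units, read off at the infinite places
other than one of them, span everything.
-/

theorem Submodule.closure_span_rat {E : Type*} [AddCommGroup E] [Module ℝ E] [Module ℚ E]
    [IsScalarTower ℚ ℝ E] [TopologicalSpace E] [IsTopologicalAddGroup E] [ContinuousSMul ℝ E]
    [T2Space E] [FiniteDimensional ℝ E] (s : Set E) :
    closure (span ℚ s : Set E) = span ℝ s := by
  refine le_antisymm (closure_minimal (span_le_restrictScalars ℚ ℝ s)
    (Submodule.closed_of_finiteDimensional _)) ?_
  let N : Submodule ℝ E :=
    { toAddSubmonoid := (span ℚ s).toAddSubmonoid.topologicalClosure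
      smul_mem' := fun c x hx =>
        map_mem_closure₂ continuous_smul (Rat.denseRange_cast c) hx fun _ ⟨q, hq⟩ y hy =>
          hq ▸ (Rat.cast_smul_eq_qsmul ℝ q y).symm ▸ (span ℚ s).smul_mem q hy }
  exact span_le.mpr fun x hx => show x ∈ N from subset_closure (subset_span hx)

theorem Submodule.le_span_of_map_le_of_disjoint_ker {R M N : Type*} [Ring R] [AddCommGroup M]
    [Module R M] [AddCommGroup N] [Module R N] {V : Submodule R M} {s : Set M} {f : M →ₗ[R] N}
    (hsV : s ⊆ V) (hV : Disjoint V (LinearMap.ker f)) (hf : V.map f ≤ span R (f '' s)) :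
    V ≤ span R s := by
  intro x hx
  rw [← map_span] at hf
  obtain ⟨y, hy, hyx⟩ := hf (mem_map_of_mem hx)
  have hxy : x - y = 0 :=
    disjoint_def.mp hV _ (V.sub_mem hx (span_le.mpr hsV hy)) (by simp [hyx])
  rwa [sub_eq_zero.mp hxy]

theorem Submodule.exists_mem_eqOn {ι 𝕜 : Type*} [Field 𝕜] {W : Submodule 𝕜 (ι → 𝕜)}
    (s : Finset ι) (hs : ∀ i ∈ s, ∃ e ∈ W, e i ≠ 0 ∧ ∀ j ∈ s, j ≠ i → e j = 0) (x : ι → 𝕜) :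
    ∃ y ∈ W, Set.EqOn y x s := by
  classical
  induction s using Finset.induction_on with
  | empty => exact ⟨0, W.zero_mem, by simp⟩
  | insert a s ha ih =>
    obtain ⟨y, hyW, hy⟩ := ih fun i hi => (hs i (Finset.mem_insert_of_mem hi)).imp
      fun e ⟨heW, hei, he⟩ => ⟨heW, hei, fun j hj => he j (Finset.mem_insert_of_mem hj)⟩
    obtain ⟨e, heW, hea, he⟩ := hs a (Finset.mem_insert_self a s)
    refine ⟨y + ((x a - y a) / e a) • e, W.add_mem hyW (W.smul_mem _ heW), ?_⟩
    intro j hj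
    rcases Finset.mem_insert.mp hj with rfl | hj
    · simp [div_mul_cancel₀ _ hea]
    · simp [hy hj, he j (Finset.mem_insert_of_mem hj) (ne_of_mem_of_not_mem hj ha)]

open scoped nonZeroDivisors in
theorem Ideal.isPrincipal_pow_card_classGroup {R : Type*} [CommRing R] [IsDedekindDomain R]
    [Fintype (ClassGroup R)] (I : Ideal R) : (I ^ Fintype.card (ClassGroup R)).IsPrincipal := by
  rcases eq_or_ne I ⊥ with rfl | hI
  · rw [bot_pow Fintype.card_ne_zero]
    exact bot_isPrincipal
  have hI0 : I ∈ (Ideal R)⁰ := mem_nonZeroDivisors_of_ne_zero hI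
  rw [← ClassGroup.mk0_eq_one_iff (pow_mem hI0 _), ← pow_card_eq_one (x := ClassGroup.mk0 ⟨I, hI0⟩),
    ← map_pow]
  rfl

theorem IsDedekindDomain.HeightOneSpectrum.exists_mem_asIdeal_iff_eq {R : Type*} [CommRing R]
    [IsDedekindDomain R] [Fintype (ClassGroup R)] (v : HeightOneSpectrum R) :
    ∃ β : R, β ≠ 0 ∧ ∀ w : HeightOneSpectrum R, β ∈ w.asIdeal ↔ w = v := by
  obtain ⟨β, hβ⟩ := (v.asIdeal.isPrincipal_pow_card_classGroup).principal
  refine ⟨β, fun h => pow_ne_zero _ v.ne_bot (by simpa [h] using hβ), fun w => ?_⟩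
  rw [← span_singleton_le_iff_mem, ← submodule_span_eq, ← hβ,
    w.isPrime.pow_le_iff Fintype.card_ne_zero]
  exact ⟨fun h => HeightOneSpectrum.ext (v.isMaximal.eq_of_le w.isPrime.ne_top h).symm,
    fun h => h ▸ le_rfl⟩

theorem NumberField.finprod_finitePlace_eq_prod {K : Type*} [Field K] [NumberField K] {α : K}
    (S : Finset (HeightOneSpectrum (𝓞 K))) (hS : ∀ v ∉ S, FinitePlace.mk v α = 1) :
    ∏ᶠ w : FinitePlace K, w α = ∏ v ∈ S, FinitePlace.mk v α := by
  rw [← finprod_comp_equiv FinitePlace.equivHeightOneSpectrum.symm]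
  exact finprod_eq_prod_of_mulSupport_subset _ fun v hv => by_contra fun hvS => hv (hS v hvS)

namespace SUnits

section FinitePlace

lemma resChar_eq_absNorm_under {F : Type*} [Field F] (v : HeightOneSpectrum (𝓞 F)) :
    resChar F v = absNorm (under ℤ v.asIdeal) :=
  Ideal.ringChar_quot _

instance {F : Type*} [Field F] (v : HeightOneSpectrum (𝓞 F)) :
    v.asIdeal.LiesOver (span {(resChar F v : ℤ)}) := by
  rw [resChar_eq_absNorm_under]
  infer_instance

lemma resChar_prime {F : Type*} [Field F] (v : HeightOneSpectrum (𝓞 F)) :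
    (resChar F v).Prime := by
  have : NeZero v.asIdeal := ⟨v.ne_bot⟩
  rw [resChar_eq_absNorm_under]
  exact Nat.absNorm_under_prime _

variable {K}
variable (v : HeightOneSpectrum (𝓞 K))

lemma ramIdx_ne_zero : ramIdx K v ≠ 0 :=
  Ideal.IsDedekindDomain.ramificationIdx'_ne_zero_of_liesOver _
    (by simpa using (resChar_prime v).ne_zero)

lemma localDeg_ne_zero : localDeg K v ≠ 0 :=
  mul_ne_zero (ramIdx_ne_zero v) (inertiaDeg'_pos' _ _).ne'

lemma finitePlace_mk_apply {α : K} (hα : α ≠ 0) :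
    FinitePlace.mk v α = (absNorm v.asIdeal : ℝ) ^ (-ordAt K v α) := by
  have h : v.valuation K α ≠ 0 := (Valuation.ne_zero_iff _).mpr hα
  rw [FinitePlace.mk_apply, FinitePlace.norm_embedding', WithZeroMulInt.toNNReal_neg_apply _ h,
    ordAt, dif_neg h, neg_neg]
  simp

/-- `N(v) = p ^ f_v`, so raising `p ^ (-ord_v / e_v)` to the power `e_v f_v` gives Mathlib's
normalization `N(v) ^ (-ord_v)`. -/
lemma finAbs_pow_localDeg (α : K) : finAbs K v α ^ localDeg K v = FinitePlace.mk v α := by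
  rcases eq_or_ne α 0 with rfl | hα
  · simp [finAbs, localDeg_ne_zero v]
  have hp : (0 : ℝ) < resChar K v := by exact_mod_cast (resChar_prime v).pos
  have he : (ramIdx K v : ℝ) ≠ 0 := by exact_mod_cast ramIdx_ne_zero v
  rw [finitePlace_mk_apply v hα, absNorm_eq_pow_inertiaDeg' _ (resChar_prime v), finAbs,
    if_neg hα, localDeg, ← Real.rpow_natCast, ← Real.rpow_mul hp.le]
  push_cast
  rw [← Real.rpow_natCast, ← Real.rpow_intCast, ← Real.rpow_mul hp.le]
  congr 1
  push_cast
  field_simp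

lemma finAbs_nonneg (α : K) : 0 ≤ finAbs K v α := by
  unfold finAbs
  split_ifs <;> positivity

lemma finAbs_eq_one_iff {α : K} : finAbs K v α = 1 ↔ FinitePlace.mk v α = 1 := by
  rw [← finAbs_pow_localDeg, pow_eq_one_iff_of_nonneg (finAbs_nonneg v α) (localDeg_ne_zero v)]

lemma finAbs_algebraMap_eq_one_iff (β : 𝓞 K) :
    finAbs K v (algebraMap (𝓞 K) K β) = 1 ↔ β ∉ v.asIdeal := by
  rw [finAbs_eq_one_iff, FinitePlace.mk_apply, FinitePlace.norm_eq_one_iff_notMem]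

lemma finAbs_units_eq_one (u : (𝓞 K)ˣ) : finAbs K v u = 1 :=
  (finAbs_algebraMap_eq_one_iff v _).mpr fun h =>
    v.isPrime.ne_top (eq_top_of_isUnit_mem _ h u.isUnit)

end FinitePlace

variable {K}

lemma placeAbs_pos (v : Place K) {α : K} (hα : α ≠ 0) : 0 < placeAbs K v α := by
  rcases v with w | v
  · exact w.pos_iff.mpr hα
  · have hp : (0 : ℝ) < resChar K v := by exact_mod_cast (resChar_prime v).pos
    simp only [placeAbs, finAbs, if_neg hα]
    positivity

lemma placeLocalDeg_ne_zero (v : Place K) : placeLocalDeg K v ≠ 0 := by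
  rcases v with w | v
  · exact w.mult_ne_zero
  · exact localDeg_ne_zero v

lemma prod_placeAbs_pow_placeLocalDeg {T : Finset (Place K)} (hT : ∀ w, Sum.inl w ∈ T)
    {α : K} (hα : α ≠ 0) (hαT : ∀ v ∉ T, placeAbs K v α = 1) :
    ∏ v ∈ T, placeAbs K v α ^ placeLocalDeg K v = 1 := by
  have hfin : ∏ᶠ w : FinitePlace K, w α = ∏ v ∈ T.toRight, finAbs K v α ^ localDeg K v := by
    simp_rw [finAbs_pow_localDeg]
    refine finprod_finitePlace_eq_prod T.toRight fun v hv => ?_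
    rw [← finAbs_eq_one_iff]
    exact hαT (Sum.inr v) (by simpa using hv)
  have hinf : T.toLeft = Finset.univ := Finset.eq_univ_of_forall fun w => by simpa using hT w
  rw [← Finset.toLeft_disjSum_toRight (u := T), Finset.prod_disjSum, hinf]
  exact hfin ▸ prod_abs_eq_one hα

variable (T : Finset (Place K))

def sUnits : Set K := {α | α ≠ 0 ∧ ∀ v ∉ T, placeAbs K v α = 1}

noncomputable def sLogEmbedding (α : K) : T → ℝ := fun v =>
  (placeLocalDeg K v.1 / Module.finrank ℚ K : ℝ) * Real.log (placeAbs K v.1 α)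

variable {T}

lemma sLogEmbedding_apply_eq_zero_iff {α : K} (hα : α ≠ 0) (v : T) :
    sLogEmbedding T α v = 0 ↔ placeAbs K v.1 α = 1 := by
  have hpos := placeAbs_pos v.1 hα
  simp [sLogEmbedding, placeLocalDeg_ne_zero, Module.finrank_pos.ne', Real.log_eq_zero, hpos.ne',
    (neg_neg_of_pos one_pos).trans hpos |>.ne']

lemma sum_sLogEmbedding_eq_zero (hT : ∀ w, Sum.inl w ∈ T) {α : K} (hα : α ∈ sUnits T) :
    ∑ v, sLogEmbedding T α v = 0 := by
  have hprod := congrArg Real.log (prod_placeAbs_pow_placeLocalDeg hT hα.1 hα.2)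
  rw [Real.log_prod fun v _ => pow_ne_zero _ (placeAbs_pos v hα.1).ne', Real.log_one] at hprod
  simp_rw [Real.log_pow] at hprod
  simp only [sLogEmbedding, div_mul_eq_mul_div, ← Finset.sum_div]
  rw [Finset.sum_coe_sort T (fun v => placeLocalDeg K v * Real.log (placeAbs K v α)), hprod,
    zero_div]

lemma sum_eq_zero_of_mem_span (hT : ∀ w, Sum.inl w ∈ T) {x : T → ℝ}
    (hx : x ∈ Submodule.span ℝ (sLogEmbedding T '' sUnits T)) : ∑ v, x v = 0 := by
  induction hx using Submodule.span_induction with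
  | mem _ h => obtain ⟨α, hα, rfl⟩ := h; exact sum_sLogEmbedding_eq_zero hT hα
  | zero => exact Finset.sum_const_zero
  | add x y _ _ hx hy => simp only [Pi.add_apply, Finset.sum_add_distrib, hx, hy, add_zero]
  | smul c x _ hx => simp only [Pi.smul_apply, smul_eq_mul, ← Finset.mul_sum, hx, mul_zero]

lemma units_mem_sUnits (hT : ∀ w, Sum.inl w ∈ T) (u : (𝓞 K)ˣ) : (u : K) ∈ sUnits T := by
  refine ⟨by simp, fun v hv => ?_⟩
  rcases v with w | v
  · exact absurd (hT w) hv
  · exact finAbs_units_eq_one v u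

lemma exists_sUnit_single (hT : ∀ w, Sum.inl w ∈ T) {v : HeightOneSpectrum (𝓞 K)}
    (hv : Sum.inr v ∈ T) : ∃ α ∈ sUnits T, sLogEmbedding T α ⟨_, hv⟩ ≠ 0 ∧
      ∀ w (hw : Sum.inr w ∈ T), w ≠ v → sLogEmbedding T α ⟨_, hw⟩ = 0 := by
  obtain ⟨β, hβ0, hβ⟩ := v.exists_mem_asIdeal_iff_eq
  have hα : algebraMap (𝓞 K) K β ≠ 0 := by simpa using hβ0
  have habs (w : HeightOneSpectrum (𝓞 K)) :
      placeAbs K (Sum.inr w) (algebraMap (𝓞 K) K β) = 1 ↔ w ≠ v :=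
    (finAbs_algebraMap_eq_one_iff w β).trans (hβ w).not
  refine ⟨_, ⟨hα, fun w hw => ?_⟩, ?_, fun w hw hwv => ?_⟩
  · rcases w with w | w
    · exact absurd (hT w) hw
    · exact (habs w).mpr fun h => hw (h ▸ hv)
  · rw [Ne, sLogEmbedding_apply_eq_zero_iff hα, habs, not_not]
  · exact (sLogEmbedding_apply_eq_zero_iff hα _).mpr ((habs w).mpr hwv)

open NumberField.Units NumberField.Units.dirichletUnitTheorem

noncomputable def logSpaceProj (hT : ∀ w, Sum.inl w ∈ T) : (T → ℝ) →ₗ[ℝ] logSpace K :=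
  (Module.finrank ℚ K : ℝ) • LinearMap.funLeft ℝ ℝ fun w => ⟨Sum.inl w.1, hT w.1⟩

lemma logSpaceProj_sLogEmbedding (hT : ∀ w, Sum.inl w ∈ T) (u : (𝓞 K)ˣ) :
    logSpaceProj hT (sLogEmbedding T u) = logEmbedding K (Additive.ofMul u) := by
  have hn : (Module.finrank ℚ K : ℝ) ≠ 0 := Nat.cast_ne_zero.mpr Module.finrank_pos.ne'
  ext w
  simp only [logSpaceProj, sLogEmbedding, placeAbs, placeLocalDeg, LinearMap.smul_apply,
    LinearMap.funLeft_apply, Pi.smul_apply, smul_eq_mul, logEmbedding_component]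
  field_simp

lemma eq_zero_of_logSpaceProj_eq_zero (hT : ∀ w, Sum.inl w ∈ T) {y : T → ℝ}
    (hy_sum : ∑ v, y v = 0) (hy_fin : ∀ v : T, v.1.isRight → y v = 0)
    (hy : logSpaceProj hT y = 0) : y = 0 := by
  let t₀ : T := ⟨Sum.inl w₀, hT w₀⟩
  have hy_ne (v : T) (hv : v ≠ t₀) : y v = 0 := by
    rcases v with ⟨w | v, hw⟩
    · have := congrFun hy ⟨w, fun h => hv (by subst h; rfl)⟩
      simpa [logSpaceProj, Module.finrank_pos.ne'] using this
    · exact hy_fin _ rfl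
  funext v
  by_cases hv : v = t₀
  · rw [hv, Pi.zero_apply, ← hy_sum, Fintype.sum_eq_single t₀ hy_ne]
  · exact hy_ne v hv

lemma mem_span_units_of_sum_eq_zero (hT : ∀ w, Sum.inl w ∈ T) {x : T → ℝ}
    (hx : ∑ v, x v = 0) (hfin : ∀ v : T, v.1.isRight → x v = 0) :
    x ∈ Submodule.span ℝ (Set.range fun u : (𝓞 K)ˣ => sLogEmbedding T (u : K)) := by
  let V : Submodule ℝ (T → ℝ) := LinearMap.ker (∑ v, LinearMap.proj v) ⊓
    ⨅ (v : T) (_ : v.1.isRight), LinearMap.ker (LinearMap.proj v)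
  have mem_V (y : T → ℝ) : y ∈ V ↔ ∑ v, y v = 0 ∧ ∀ v : T, v.1.isRight → y v = 0 := by
    simp [V]
  refine Submodule.le_span_of_map_le_of_disjoint_ker (f := logSpaceProj hT) ?_ ?_ ?_
    ((mem_V x).mpr ⟨hx, hfin⟩)
  · rintro _ ⟨u, rfl⟩
    refine (mem_V _).mpr ⟨sum_sLogEmbedding_eq_zero hT (units_mem_sUnits hT u), ?_⟩
    rintro ⟨w | v, hv⟩ hfin
    · simp at hfin
    · exact (sLogEmbedding_apply_eq_zero_iff (by simp) _).mpr (finAbs_units_eq_one v u)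
  · exact Submodule.disjoint_def.mpr fun y hyV hy =>
      eq_zero_of_logSpaceProj_eq_zero hT ((mem_V y).mp hyV).1 ((mem_V y).mp hyV).2 hy
  · calc V.map (logSpaceProj hT) ≤ Submodule.span ℝ (unitLattice K : Set (logSpace K)) := by
          rw [unitLattice_span_eq_top]
          exact le_top
      _ ≤ _ := by
          refine Submodule.span_mono ?_
          rintro _ ⟨u, -, rfl⟩
          exact ⟨_, ⟨u.toMul, rfl⟩, logSpaceProj_sLogEmbedding hT u.toMul⟩

lemma mem_span_of_sum_eq_zero (hT : ∀ w, Sum.inl w ∈ T) {x : T → ℝ} (hx : ∑ v, x v = 0) :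
    x ∈ Submodule.span ℝ (sLogEmbedding T '' sUnits T) := by
  set W := Submodule.span ℝ (sLogEmbedding T '' sUnits T)
  let finiteCoords : Finset T := Finset.univ.filter fun v => v.1.isRight
  have hsingle : ∀ v ∈ finiteCoords, ∃ e ∈ W, e v ≠ 0 ∧ ∀ w ∈ finiteCoords, w ≠ v → e w = 0 := by
    rintro ⟨w | v, hv⟩ hvfin
    · simp [finiteCoords] at hvfin
    obtain ⟨α, hαU, hα, hα_ne⟩ := exists_sUnit_single hT hv
    refine ⟨_, Submodule.subset_span ⟨α, hαU, rfl⟩, hα, ?_⟩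
    rintro ⟨w | w, hw⟩ hwfin hwv
    · simp [finiteCoords] at hwfin
    · exact hα_ne w hw fun h => hwv (by subst h; rfl)
  obtain ⟨y, hyW, hyx⟩ := Submodule.exists_mem_eqOn _ hsingle x
  have hxy : x - y ∈ W := by
    refine Submodule.span_mono ?_ (mem_span_units_of_sum_eq_zero hT ?_ fun v hv => ?_)
    · rintro _ ⟨u, rfl⟩
      exact ⟨_, units_mem_sUnits hT u, rfl⟩
    · simp only [Pi.sub_apply, Finset.sum_sub_distrib, hx, sum_eq_zero_of_mem_span hT hyW,
        sub_zero]
    · exact sub_eq_zero.mpr (hyx (by simpa [finiteCoords] using hv)).symm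
  simpa using W.add_mem hxy hyW

end SUnits

/-- **Dirichlet's `S`-unit theorem, density form.** If `T` is a finite set of places of a
number field `K` containing all the archimedean places, then the `ℚ`-linear span of the image
of the `T`-unit group `U_{K,T} = {α ∈ K^× : ‖α‖_v = 1 ∀ v ∉ T}` under the logarithmic
embedding `α ↦ (([K_v:ℚ_v]/[K:ℚ]) · log ‖α‖_v)_{v ∈ T}` is dense in the hyperplane
`{x ∈ ℝ^T : ∑_v x_v = 0}`. -/
theorem spanQ_logEmbedding_T_units_dense_in_hyperplane
    (K : Type*) [Field K] [NumberField K]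
    (T : Finset (Place K)) (hT : ∀ w : InfinitePlace K, Sum.inl w ∈ T)
    (U : Set K) (hU : U = {α : K | α ≠ 0 ∧ ∀ v : Place K, v ∉ T → placeAbs K v α = 1})
    (l : K → (T → ℝ))
    (hl : ∀ α (v : T), l α v =
      ((placeLocalDeg K v.1 : ℝ) / (Module.finrank ℚ K : ℝ)) * Real.log (placeAbs K v.1 α)) :
    closure (↑(Submodule.span ℚ (l '' U)) : Set (T → ℝ)) = {x : T → ℝ | ∑ v, x v = 0} := by
  obtain rfl : l = SUnits.sLogEmbedding T := funext fun α => funext (hl α)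
  obtain rfl : U = SUnits.sUnits T := hU
  rw [Submodule.closure_span_rat]
  ext x
  exact ⟨SUnits.sum_eq_zero_of_mem_span hT, SUnits.mem_span_of_sum_eq_zero hT⟩
end

section
/- Let (I, ≤) be a directed partially ordered set and let (X_i)_{i ∈ I} be an inverse system of nonempty discrete topological spaces indexed by I, whose transition maps π_{ij} : X_j → X_i (for i ≤ j) are surjective with finite fibers (each point of X_i has finitely many preimages in X_j). Let Y = lim←_i X_i be the inverse limit with its limit topology and let π_i : Y → X_i be the canonical projections. Then a subset S ⊆ Y is compact and open if and only if there exist an index i ∈ I and a finite subset F ⊆ X_i such that S = π_i^{-1}(F). -/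
def InverseLimit {I : Type*} [PartialOrder I] (X : I → Type*)
    (π : ∀ i j, i ≤ j → X j → X i) : Type _ :=
  {f : ∀ i, X i // ∀ (i j : I) (h : i ≤ j), π i j h (f j) = f i}

instance InverseLimit.instTopologicalSpace {I : Type*} [PartialOrder I] (X : I → Type*)
    [∀ i, TopologicalSpace (X i)] (π : ∀ i j, i ≤ j → X j → X i) :
    TopologicalSpace (InverseLimit X π) :=
  inferInstanceAs (TopologicalSpace {f : ∀ i, X i // ∀ (i j : I) (h : i ≤ j), π i j h (f j) = f i})

def InverseLimit.proj {I : Type*} [PartialOrder I] {X : I → Type*}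
    {π : ∀ i j, i ≤ j → X j → X i} (i : I) (f : InverseLimit X π) : X i :=
  f.1 i

/-!
The fibres `proj k ⁻¹' {x}` form a basis of the inverse limit, shrinking as `k` grows. So for an
open `S` the sets "points whose level-`k` fibre lies in `S`" form a directed open cover of `S`;
if `S` is compact, one level `i` already suffices, `S` is saturated for `proj i`, and
`proj i '' S` is compact, hence finite, in the discrete space `X i`.

Conversely, the inverse limit is closed in `Π j, X j`, and choosing `m ≥ i, j` shows that
`proj i ⁻¹' F` lies in the product of the finite sets `π j m '' (π i m ⁻¹' F)`, which is compact
by Tychonoff.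
-/

open Filter Topology

namespace InverseLimit

variable {I : Type*} [PartialOrder I] {X : I → Type*} {π : ∀ i j, i ≤ j → X j → X i}

lemma π_proj (f : InverseLimit X π) {i j : I} (h : i ≤ j) : π i j h (proj j f) = proj i f :=
  f.2 i j h

lemma preimage_proj_singleton_antitone (f : InverseLimit X π) :
    Antitone fun k ↦ proj (π := π) k ⁻¹' {proj k f} := by
  intro i j h g (hg : proj j g = proj j f)
  show proj i g = proj i f
  rw [← π_proj g h, ← π_proj f h, hg]

variable [∀ i, TopologicalSpace (X i)]

lemma isInducing_val : IsInducing fun f : InverseLimit X π ↦ f.1 :=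
  ⟨rfl⟩

lemma continuous_proj (i : I) : Continuous (proj (X := X) (π := π) i) :=
  (continuous_apply i).comp isInducing_val.continuous

lemma hasBasis_nhds [Nonempty I] [IsDirected I (· ≤ ·)] [∀ i, DiscreteTopology (X i)]
    (f : InverseLimit X π) :
    (𝓝 f).HasBasis (fun _ ↦ True) fun k ↦ proj k ⁻¹' {proj k f} := by
  have hnhds : 𝓝 f = ⨅ k, 𝓟 (proj (π := π) k ⁻¹' {proj k f}) := by
    rw [isInducing_val.nhds_eq_comap, nhds_pi, Filter.pi, comap_iInf]
    simp only [nhds_discrete, comap_pure, comap_principal]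
    rfl
  rw [hnhds]
  exact hasBasis_iInf_principal (preimage_proj_singleton_antitone f).directed_ge

lemma exists_preimage_image_proj_eq_of_isCompact_of_isOpen [Nonempty I] [IsDirected I (· ≤ ·)]
    [∀ i, DiscreteTopology (X i)] {S : Set (InverseLimit X π)} (hc : IsCompact S)
    (ho : IsOpen S) : ∃ i, proj i ⁻¹' (proj i '' S) = S := by
  let U : I → Set (InverseLimit X π) := fun k ↦ proj k ⁻¹' {x | proj k ⁻¹' {x} ⊆ S}
  have hU_open : ∀ k, IsOpen (U k) := fun k ↦ (isOpen_discrete _).preimage (continuous_proj k)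
  have hS_cover : S ⊆ ⋃ k, U k := fun f hf ↦ by
    obtain ⟨k, -, hk⟩ := (hasBasis_nhds f).mem_iff.1 (ho.mem_nhds hf)
    exact Set.mem_iUnion.2 ⟨k, hk⟩
  have hU_mono : Monotone U := fun k l hkl f hf ↦
    (preimage_proj_singleton_antitone f hkl).trans hf
  obtain ⟨i, hi⟩ := hc.elim_directed_cover U hU_open hS_cover hU_mono.directed_le
  refine ⟨i, (Set.subset_preimage_image _ _).antisymm' ?_⟩
  rintro g ⟨f, hf, hfg⟩
  exact hi hf hfg.symm

lemma isClosed_range_val [∀ i, T2Space (X i)] (hπ : ∀ i j h, Continuous (π i j h)) :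
    IsClosed (Set.range fun f : InverseLimit X π ↦ f.1) := by
  simp only [InverseLimit, Subtype.range_coe_subtype, Set.ofPred_forall]
  exact isClosed_iInter fun i ↦ isClosed_iInter fun j ↦ isClosed_iInter fun h ↦
    isClosed_eq ((hπ i j h).comp (continuous_apply j)) (continuous_apply i)

lemma isClosedEmbedding_val [∀ i, T2Space (X i)] (hπ : ∀ i j h, Continuous (π i j h)) :
    IsClosedEmbedding fun f : InverseLimit X π ↦ f.1 :=
  ⟨⟨isInducing_val, Subtype.val_injective⟩, isClosed_range_val hπ⟩

lemma isCompact_preimage_proj [IsDirected I (· ≤ ·)] [∀ i, T2Space (X i)]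
    (hπ : ∀ i j h, Continuous (π i j h)) (hfib : ∀ i j h x, (π i j h ⁻¹' {x}).Finite) {i : I}
    {F : Set (X i)} (hF : F.Finite) : IsCompact (proj (π := π) i ⁻¹' F) := by
  choose m him hjm using fun j ↦ directed_of (· ≤ ·) i j
  let T j : Set (X j) := π j (m j) (hjm j) '' (π i (m j) (him j) ⁻¹' F)
  have hT : ∀ j, IsCompact (T j) := fun j ↦
    ((hF.preimage' fun x _ ↦ hfib _ _ _ x).image _).isCompact
  have hsub : proj i ⁻¹' F ⊆ (fun f : InverseLimit X π ↦ f.1) ⁻¹' Set.univ.pi T :=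
    fun g hg j _ ↦ ⟨proj (m j) g, by rwa [Set.mem_preimage, π_proj g (him j)], π_proj g _⟩
  exact ((isClosedEmbedding_val hπ).isCompact_preimage (isCompact_univ_pi hT)).of_isClosed_subset
    (hF.isClosed.preimage (continuous_proj i)) hsub

end InverseLimit

theorem isCompact_isOpen_iff_preimage_finite_of_inverseLimit_general
    {I : Type*} [PartialOrder I] [Nonempty I] [IsDirected I (· ≤ ·)]
    (X : I → Type*) [∀ i, TopologicalSpace (X i)] [∀ i, DiscreteTopology (X i)]
    (π : ∀ i j, i ≤ j → X j → X i)
    (hfib : ∀ (i j : I) (h : i ≤ j) (x : X i), {y : X j | π i j h y = x}.Finite)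
    (S : Set (InverseLimit X π)) :
    (IsCompact S ∧ IsOpen S) ↔
      ∃ (i : I) (F : Set (X i)), F.Finite ∧ S = InverseLimit.proj i ⁻¹' F := by
  constructor
  · rintro ⟨hc, ho⟩
    obtain ⟨i, hi⟩ := InverseLimit.exists_preimage_image_proj_eq_of_isCompact_of_isOpen hc ho
    exact ⟨i, _, (hc.image (InverseLimit.continuous_proj i)).finite_of_discrete, hi.symm⟩
  · rintro ⟨i, F, hF, rfl⟩
    exact ⟨InverseLimit.isCompact_preimage_proj (fun _ _ _ ↦ continuous_of_discreteTopology)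
      hfib hF, (isOpen_discrete F).preimage (InverseLimit.continuous_proj i)⟩

/-- In the inverse limit `Y = lim← X i` of nonempty discrete spaces over a directed poset,
with surjective transition maps having finite fibers, a subset `S ⊆ Y` is compact and open
if and only if `S = π_i⁻¹(F)` for some index `i` and some finite subset `F ⊆ X i`. -/
theorem isCompact_isOpen_iff_preimage_finite_of_inverseLimit
    {I : Type*} [PartialOrder I] [Nonempty I] [IsDirected I (· ≤ ·)]
    (X : I → Type*) [∀ i, TopologicalSpace (X i)] [∀ i, DiscreteTopology (X i)]
    [∀ i, Nonempty (X i)]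
    (π : ∀ i j, i ≤ j → X j → X i)
    (hrefl : ∀ (i : I) (x : X i), π i i le_rfl x = x)
    (hcomp : ∀ (i j k : I) (hij : i ≤ j) (hjk : j ≤ k) (x : X k),
      π i j hij (π j k hjk x) = π i k (hij.trans hjk) x)
    (hsurj : ∀ (i j : I) (h : i ≤ j), Function.Surjective (π i j h))
    (hfib : ∀ (i j : I) (h : i ≤ j) (x : X i), {y : X j | π i j h y = x}.Finite)
    (S : Set (InverseLimit X π)) :
    (IsCompact S ∧ IsOpen S) ↔
      ∃ (i : I) (F : Set (X i)), F.Finite ∧ S = InverseLimit.proj i ⁻¹' F :=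
  isCompact_isOpen_iff_preimage_finite_of_inverseLimit_general X π hfib S
end
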